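/- arXiv:2503.14942 — 2 statements merged into one kernel-verified Lean document; each statement's English description precedes it below -/
import Mathlib

section
/- For every α > 0, the function c(α) := e^{-α²/2}(I₀(α²/2) + I₁(α²/2)) admits the power series expansion c(α) = ∑_{k=0}^∞ ((2k-1)!!/(2^k k! (k+1)!)) (-1)^k α^{2k}. -/
open Real

/-- Modified Bessel function of the first kind `I_ν`, defined by its power series. -/
noncomputable def besselI (ν x : ℝ) : ℝ :=
  ∑' k : ℕ, (x / 2) ^ (2 * (k : ℝ) + ν) / ((Nat.factorial k : ℝ) * Real.Gamma (ν + k + 1))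

/-- The coefficient `c(α) = e^{-α²/2} (I₀(α²/2) + I₁(α²/2))`. -/
noncomputable def cWeak (α : ℝ) : ℝ :=
  Real.exp (-α ^ 2 / 2) * (besselI 0 (α ^ 2 / 2) + besselI 1 (α ^ 2 / 2))

namespace CWeakAux

open Finset

/-- `b k = (-1)^k (2k-1)!! / (k! (k+1)!)`, the target power series coefficients (in `t = α²/2`). -/
noncomputable def bb (k : ℕ) : ℝ :=
  (-1) ^ k * (Nat.doubleFactorial (2 * k - 1) : ℝ) /
    ((Nat.factorial k : ℝ) * (Nat.factorial (k + 1) : ℝ))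

/-- `a n = 1 / (2^n ⌊n/2⌋! ⌈n/2⌉!)`, the coefficients of `I₀(t) + I₁(t)`. -/
noncomputable def aa (n : ℕ) : ℝ :=
  1 / (2 ^ n * (Nat.factorial (n / 2) : ℝ) * (Nat.factorial ((n + 1) / 2) : ℝ))

lemma dfact_step (k : ℕ) :
    Nat.doubleFactorial (2 * (k + 1) - 1) = (2 * k + 1) * Nat.doubleFactorial (2 * k - 1) := by
  cases k with
  | zero => rfl
  | succ k =>
      have h1 : 2 * (k + 1 + 1) - 1 = (2 * (k + 1) - 1) + 2 := by omega
      have h2 : (2 * (k + 1) - 1) + 2 = 2 * (k + 1) + 1 := by omega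
      rw [h1, Nat.doubleFactorial_add_two, h2]

lemma factorial_cast_ne (n : ℕ) : ((Nat.factorial n : ℝ)) ≠ 0 := by
  exact_mod_cast Nat.factorial_ne_zero n

lemma bb_rec (k : ℕ) :
    ((k : ℝ) + 1) * ((k : ℝ) + 2) * bb (k + 1) = -(2 * (k : ℝ) + 1) * bb k := by
  unfold bb
  rw [dfact_step k]
  rw [show k + 1 + 1 = k + 2 from rfl, Nat.factorial_succ (k + 1), Nat.factorial_succ k]
  push_cast
  field_simp
  ring

lemma aa_rec (n : ℕ) :
    ((n : ℝ) + 2) * ((n : ℝ) + 3) * aa (n + 2) = aa (n + 1) + aa n := by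
  rcases Nat.even_or_odd n with ⟨m, rfl⟩ | ⟨m, rfl⟩
  · have hmm : m + m = 2 * m := by ring
    rw [hmm]
    have e1 : (2 * m) / 2 = m := by omega
    have e2 : (2 * m + 1) / 2 = m := by omega
    have e3 : (2 * m + 2) / 2 = m + 1 := by omega
    have e4 : (2 * m + 3) / 2 = m + 1 := by omega
    unfold aa
    rw [show 2 * m + 2 + 1 = 2 * m + 3 from rfl, show 2 * m + 1 + 1 = 2 * m + 2 from rfl,
      e1, e2, e3, e4]
    rw [Nat.factorial_succ m]
    rw [show (2 : ℝ) ^ (2 * m + 2) = 2 ^ (2 * m) * 4 by rw [pow_add]; norm_num,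
      show (2 : ℝ) ^ (2 * m + 1) = 2 ^ (2 * m) * 2 by rw [pow_add]; norm_num]
    have h2 : (2 : ℝ) ^ (2 * m) ≠ 0 := by positivity
    have hf := factorial_cast_ne m
    push_cast
    field_simp
    ring
  · have e1 : (2 * m + 1) / 2 = m := by omega
    have e2 : (2 * m + 2) / 2 = m + 1 := by omega
    have e3 : (2 * m + 3) / 2 = m + 1 := by omega
    have e4 : (2 * m + 4) / 2 = m + 2 := by omega
    unfold aa
    rw [show 2 * m + 1 + 2 = 2 * m + 3 from rfl, show 2 * m + 1 + 1 = 2 * m + 2 from rfl,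
      show 2 * m + 3 + 1 = 2 * m + 4 from rfl, show 2 * m + 2 + 1 = 2 * m + 3 from rfl,
      e1, e2, e3, e4]
    rw [Nat.factorial_succ (m + 1), Nat.factorial_succ m]
    rw [show (2 : ℝ) ^ (2 * m + 3) = 2 ^ (2 * m + 1) * 4 by
        rw [show 2 * m + 3 = 2 * m + 1 + 2 from rfl, pow_add]; norm_num,
      show (2 : ℝ) ^ (2 * m + 2) = 2 ^ (2 * m + 1) * 2 by
        rw [show 2 * m + 2 = 2 * m + 1 + 1 from rfl, pow_add]; norm_num]
    have h2 : (2 : ℝ) ^ (2 * m + 1) ≠ 0 := by positivity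
    have hf := factorial_cast_ne m
    push_cast
    field_simp
    ring

/-- Convolution-style terms (with an explicit `if` so that the length is uniform). -/
noncomputable def FF (m k : ℕ) : ℝ :=
  if k ≤ m then bb k / (Nat.factorial (m - k) : ℝ) else 0

/-- `T n = ∑_{k=0}^n b_k / (n-k)!`. -/
noncomputable def TT (n : ℕ) : ℝ := ∑ k ∈ range (n + 1), bb k / (Nat.factorial (n - k) : ℝ)

lemma TT_eq_sumF (n N : ℕ) (h : n + 1 ≤ N) : ∑ k ∈ range N, FF n k = TT n := by
  rw [TT, ← Finset.sum_subset (Finset.range_subset_range.mpr h)]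
  · apply Finset.sum_congr rfl
    intro k hk
    rw [Finset.mem_range] at hk
    rw [FF, if_pos (by omega)]
  · intro k _ hk
    rw [Finset.mem_range, not_lt] at hk
    rw [FF, if_neg (by omega)]

/-- Telescoping certificate function. -/
noncomputable def GG (n k : ℕ) : ℝ :=
  if k ≤ n + 2 then -(k : ℝ) * ((k : ℝ) + 1) * bb k / (Nat.factorial (n + 2 - k) : ℝ) else 0

lemma key_step (n k : ℕ) (hk : k ≤ n + 2) :
    ((n : ℝ) + 2) * ((n : ℝ) + 3) * FF (n + 2) k - FF (n + 1) k - FF n k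
      = GG n (k + 1) - GG n k := by
  rcases lt_or_ge n (k : ℕ) with hlt | hle
  · -- k = n + 1 or k = n + 2
    rcases (by omega : k = n + 1 ∨ k = n + 2) with rfl | rfl
    · have h1 : n + 2 - (n + 1) = 1 := by omega
      have h2 : n + 1 - (n + 1) = 0 := by omega
      rw [FF, if_pos (by omega), FF, if_pos le_rfl, FF, if_neg (by omega),
        GG, if_pos (by omega), GG, if_pos (by omega), h1, h2,
        show n + 2 - (n + 1 + 1) = 0 from by omega]
      have hrec := bb_rec (n + 1)
      push_cast at hrec ⊢
      simp only [Nat.factorial_one, Nat.factorial_zero, Nat.cast_one, div_one, sub_zero]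
      nlinarith [hrec]
    · rw [FF, if_pos le_rfl, FF, if_neg (by omega), FF, if_neg (by omega),
        GG, if_neg (by omega), GG, if_pos le_rfl, Nat.sub_self]
      simp only [Nat.factorial_zero, Nat.cast_one, div_one, sub_zero, zero_sub]
      push_cast
      ring
  · -- k ≤ n
    obtain ⟨j, rfl⟩ := Nat.le.dest hle
    have h0 : k + j - k = j := by omega
    have h1 : k + j + 1 - k = j + 1 := by omega
    have h2 : k + j + 2 - k = j + 2 := by omega
    have h3 : k + j + 2 - (k + 1) = j + 1 := by omega
    rw [FF, if_pos (by omega), FF, if_pos (by omega), FF, if_pos (by omega),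
      GG, if_pos (by omega), GG, if_pos (by omega), h0, h1, h2, h3]
    have hrec := bb_rec k
    have hf0 := factorial_cast_ne j
    have hf1 := factorial_cast_ne (j + 1)
    have hf2 := factorial_cast_ne (j + 2)
    rw [show j + 2 = (j + 1) + 1 from rfl, Nat.factorial_succ (j + 1), Nat.factorial_succ j]
    rw [show j + 1 = j + 1 from rfl] at hf1
    have hbb : bb (k + 1) = -(2 * (k : ℝ) + 1) * bb k / (((k : ℝ) + 1) * ((k : ℝ) + 2)) := by
      rw [← hrec]
      field_simp
    rw [hbb]
    rw [Nat.factorial_succ j] at hf1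
    push_cast
    have hk1 : ((k : ℝ) + 1) ≠ 0 := by positivity
    have hk2 : ((k : ℝ) + 2) ≠ 0 := by positivity
    field_simp
    ring

lemma TT_rec (n : ℕ) :
    ((n : ℝ) + 2) * ((n : ℝ) + 3) * TT (n + 2) = TT (n + 1) + TT n := by
  have hsum :
      ∑ k ∈ range (n + 3),
        (((n : ℝ) + 2) * ((n : ℝ) + 3) * FF (n + 2) k - FF (n + 1) k - FF n k)
        = GG n (n + 3) - GG n 0 := by
    rw [← Finset.sum_range_sub (GG n) (n + 3)]
    exact Finset.sum_congr rfl fun k hk => key_step n k (by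
      rw [Finset.mem_range] at hk; omega)
  have hG0 : GG n 0 = 0 := by
    rw [GG, if_pos (by omega)]
    simp
  have hG3 : GG n (n + 3) = 0 := by
    rw [GG, if_neg (by omega)]
  rw [hG0, hG3, sub_zero] at hsum
  have hs : ∑ k ∈ range (n + 3),
      (((n : ℝ) + 2) * ((n : ℝ) + 3) * FF (n + 2) k - FF (n + 1) k - FF n k)
      = ((n : ℝ) + 2) * ((n : ℝ) + 3) * TT (n + 2) - TT (n + 1) - TT n := by
    rw [Finset.sum_sub_distrib, Finset.sum_sub_distrib, ← Finset.mul_sum,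
      TT_eq_sumF (n + 2) (n + 3) (by omega), TT_eq_sumF (n + 1) (n + 3) (by omega),
      TT_eq_sumF n (n + 3) (by omega)]
  rw [hs] at hsum
  linarith

lemma TT_eq_aa : ∀ n, TT n = aa n := by
  have main : ∀ n, TT n = aa n ∧ TT (n + 1) = aa (n + 1) := by
    intro n
    induction n with
    | zero =>
        constructor
        · rw [TT, aa]
          simp [bb, Nat.doubleFactorial]
        · rw [TT, aa]
          rw [Finset.sum_range_succ, Finset.sum_range_succ, Finset.sum_range_zero]
          norm_num [bb, Nat.doubleFactorial, Nat.factorial]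
    | succ n ih =>
        refine ⟨ih.2, ?_⟩
        have h1 := TT_rec n
        have h2 := aa_rec n
        rw [ih.1, ih.2] at h1
        have hne : ((n : ℝ) + 2) * ((n : ℝ) + 3) ≠ 0 := by positivity
        have : ((n : ℝ) + 2) * ((n : ℝ) + 3) * TT (n + 2)
            = ((n : ℝ) + 2) * ((n : ℝ) + 3) * aa (n + 2) := by rw [h1, h2]
        exact mul_left_cancel₀ hne this
  exact fun n => (main n).1

/-! ### Summability -/

lemma dfact_le (k : ℕ) : Nat.doubleFactorial (2 * k - 1) ≤ 2 ^ k * Nat.factorial k := by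
  induction k with
  | zero => simp [Nat.doubleFactorial]
  | succ k ih =>
      rw [dfact_step, pow_succ, Nat.factorial_succ]
      calc (2 * k + 1) * Nat.doubleFactorial (2 * k - 1)
          ≤ (2 * (k + 1)) * (2 ^ k * Nat.factorial k) := by
            exact Nat.mul_le_mul (by omega) ih
        _ = 2 ^ k * 2 * ((k + 1) * Nat.factorial k) := by ring

lemma abs_bb (k : ℕ) :
    |bb k| = (Nat.doubleFactorial (2 * k - 1) : ℝ) /
      ((Nat.factorial k : ℝ) * (Nat.factorial (k + 1) : ℝ)) := by
  rw [bb, abs_div, abs_mul, abs_pow, abs_neg, abs_one, one_pow, one_mul]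
  rw [abs_of_nonneg (by positivity : (0:ℝ) ≤ (Nat.doubleFactorial (2 * k - 1) : ℝ)),
    abs_of_nonneg (by positivity : (0:ℝ) ≤ (Nat.factorial k : ℝ) * (Nat.factorial (k + 1) : ℝ))]

lemma summable_bb_mul (t : ℝ) : Summable (fun k => bb k * t ^ k) := by
  apply Summable.of_norm
  refine Summable.of_nonneg_of_le (fun k => norm_nonneg _) (fun k => ?_)
    (Real.summable_pow_div_factorial (2 * |t|))
  ·
    rw [norm_mul, norm_pow, Real.norm_eq_abs, Real.norm_eq_abs, abs_bb]
    have h1 : (Nat.doubleFactorial (2 * k - 1) : ℝ) ≤ 2 ^ k * (Nat.factorial k : ℝ) := by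
      exact_mod_cast dfact_le k
    have hk : (0:ℝ) < (Nat.factorial k : ℝ) := by exact_mod_cast Nat.factorial_pos k
    have hk1 : (Nat.factorial k : ℝ) ≤ (Nat.factorial (k + 1) : ℝ) := by
      exact_mod_cast Nat.factorial_le (by omega)
    have hk1' : (0:ℝ) < (Nat.factorial (k + 1) : ℝ) := by exact_mod_cast Nat.factorial_pos (k+1)
    calc (Nat.doubleFactorial (2 * k - 1) : ℝ) /
          ((Nat.factorial k : ℝ) * (Nat.factorial (k + 1) : ℝ)) * |t| ^ k
        ≤ (2 ^ k * (Nat.factorial k : ℝ)) /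
          ((Nat.factorial k : ℝ) * (Nat.factorial k : ℝ)) * |t| ^ k := by
          apply mul_le_mul_of_nonneg_right _ (by positivity)
          exact div_le_div₀ (by positivity) h1 (by positivity)
            (mul_le_mul_of_nonneg_left hk1 hk.le)
      _ = 2 ^ k * |t| ^ k / (Nat.factorial k : ℝ) := by
          field_simp
      _ = (2 * |t|) ^ k / (Nat.factorial k : ℝ) := by rw [mul_pow]

lemma aa_nonneg (n : ℕ) : 0 ≤ aa n := by
  rw [aa]; positivity

lemma aa_le (n : ℕ) : aa n ≤ 1 / (Nat.factorial n : ℝ) := by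
  rw [aa]
  have key : (Nat.factorial n : ℝ) ≤ 2 ^ n * (Nat.factorial (n / 2) : ℝ)
      * (Nat.factorial ((n + 1) / 2) : ℝ) := by
    have h1 : n / 2 ≤ n := Nat.div_le_self n 2
    have h2 : n - n / 2 = (n + 1) / 2 := by omega
    have h3 := Nat.choose_mul_factorial_mul_factorial h1
    have h4 : Nat.choose n (n / 2) ≤ 2 ^ n := by
      calc Nat.choose n (n / 2) ≤ ∑ i ∈ Finset.range (n + 1), Nat.choose n i :=
            Finset.single_le_sum (f := fun i => Nat.choose n i)
              (fun i _ => Nat.zero_le _) (Finset.mem_range.mpr (by omega))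
        _ = 2 ^ n := Nat.sum_range_choose n
    rw [h2] at h3
    calc (Nat.factorial n : ℝ)
        = (Nat.choose n (n / 2) : ℝ) * (Nat.factorial (n / 2) : ℝ)
            * (Nat.factorial ((n + 1) / 2) : ℝ) := by exact_mod_cast h3.symm
      _ ≤ 2 ^ n * (Nat.factorial (n / 2) : ℝ) * (Nat.factorial ((n + 1) / 2) : ℝ) := by
          apply mul_le_mul_of_nonneg_right _ (by positivity)
          apply mul_le_mul_of_nonneg_right _ (by positivity)
          exact_mod_cast h4
  apply one_div_le_one_div_of_le
  · exact_mod_cast Nat.factorial_pos n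
  · exact key

lemma summable_aa_mul (t : ℝ) : Summable (fun n => aa n * t ^ n) := by
  apply Summable.of_norm
  refine Summable.of_nonneg_of_le (fun k => norm_nonneg _) (fun n => ?_)
    (Real.summable_pow_div_factorial |t|)
  ·
    rw [norm_mul, norm_pow, Real.norm_eq_abs, Real.norm_eq_abs,
      abs_of_nonneg (aa_nonneg n)]
    calc aa n * |t| ^ n ≤ (1 / (Nat.factorial n : ℝ)) * |t| ^ n :=
          mul_le_mul_of_nonneg_right (aa_le n) (by positivity)
      _ = |t| ^ n / (Nat.factorial n : ℝ) := by ring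

lemma summable_norm_bb_mul (t : ℝ) : Summable (fun k => ‖bb k * t ^ k‖) := by
  have h := (summable_bb_mul |t|).abs
  refine Summable.of_nonneg_of_le (fun k => norm_nonneg _) (fun k => ?_) h
  rw [norm_mul, norm_pow, Real.norm_eq_abs, Real.norm_eq_abs, abs_mul, abs_pow, abs_abs]

/-! ### Series rewriting and Cauchy product -/

lemma besselI_zero_eq (t : ℝ) :
    besselI 0 t = ∑' k : ℕ, (t / 2) ^ (2 * k) /
      ((Nat.factorial k : ℝ) * (Nat.factorial k : ℝ)) := by
  unfold besselI
  refine tsum_congr fun k => ?_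
  have h1 : (2 * (k : ℝ) + 0) = ((2 * k : ℕ) : ℝ) := by push_cast; ring
  rw [h1, Real.rpow_natCast]
  congr 2
  rw [show (0 : ℝ) + (k : ℝ) + 1 = (k : ℝ) + 1 by ring, Real.Gamma_nat_eq_factorial]

lemma besselI_one_eq (t : ℝ) :
    besselI 1 t = ∑' k : ℕ, (t / 2) ^ (2 * k + 1) /
      ((Nat.factorial k : ℝ) * (Nat.factorial (k + 1) : ℝ)) := by
  unfold besselI
  refine tsum_congr fun k => ?_
  have h1 : (2 * (k : ℝ) + 1) = ((2 * k + 1 : ℕ) : ℝ) := by push_cast; ring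
  rw [h1, Real.rpow_natCast]
  congr 2
  rw [show (1 : ℝ) + (k : ℝ) + 1 = ((k + 1 : ℕ) : ℝ) + 1 by push_cast; ring,
    Real.Gamma_nat_eq_factorial]

lemma aa_mul_eq (t : ℝ) (n : ℕ) :
    aa n * t ^ n = (t / 2) ^ n /
      ((Nat.factorial (n / 2) : ℝ) * (Nat.factorial ((n + 1) / 2) : ℝ)) := by
  rw [aa, div_pow, div_div, div_mul_eq_mul_div, one_mul, mul_assoc]

lemma besselI_sum_eq (t : ℝ) :
    besselI 0 t + besselI 1 t = ∑' n : ℕ, aa n * t ^ n := by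
  have hsum := summable_aa_mul t
  have hinj2 : Function.Injective fun k : ℕ => 2 * k := fun a b h => by have h' : 2 * a = 2 * b := h; omega
  have hinj21 : Function.Injective fun k : ℕ => 2 * k + 1 := fun a b h => by have h' : 2 * a + 1 = 2 * b + 1 := h; omega
  have he : Summable fun k : ℕ => aa (2 * k) * t ^ (2 * k) := hsum.comp_injective hinj2
  have ho : Summable fun k : ℕ => aa (2 * k + 1) * t ^ (2 * k + 1) := hsum.comp_injective hinj21
  have h0 : besselI 0 t = ∑' k : ℕ, aa (2 * k) * t ^ (2 * k) := by
    rw [besselI_zero_eq]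
    refine tsum_congr fun k => ?_
    rw [aa_mul_eq, show (2 * k) / 2 = k from by omega, show (2 * k + 1) / 2 = k from by omega]
  have h1 : besselI 1 t = ∑' k : ℕ, aa (2 * k + 1) * t ^ (2 * k + 1) := by
    rw [besselI_one_eq]
    refine tsum_congr fun k => ?_
    rw [aa_mul_eq, show (2 * k + 1) / 2 = k from by omega,
      show (2 * k + 1 + 1) / 2 = k + 1 from by omega]
  rw [h0, h1]
  exact tsum_even_add_odd (f := fun n : ℕ => aa n * t ^ n) he ho

lemma summable_norm_exp_series (t : ℝ) :
    Summable fun n : ℕ => ‖t ^ n / (Nat.factorial n : ℝ)‖ := by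
  refine (Real.summable_pow_div_factorial |t|).congr fun n => ?_
  rw [norm_div, Real.norm_eq_abs, Real.norm_eq_abs, abs_pow, Nat.abs_cast]

lemma cauchy (t : ℝ) :
    (∑' k : ℕ, bb k * t ^ k) * Real.exp t = ∑' n : ℕ, aa n * t ^ n := by
  have hexp : Real.exp t = ∑' n : ℕ, t ^ n / (Nat.factorial n : ℝ) := by
    rw [Real.exp_eq_exp_ℝ, NormedSpace.exp_eq_tsum_div]
  rw [hexp, tsum_mul_tsum_eq_tsum_sum_antidiagonal_of_summable_norm
    (summable_norm_bb_mul t) (summable_norm_exp_series t)]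
  refine tsum_congr fun n => ?_
  rw [Finset.Nat.sum_antidiagonal_eq_sum_range_succ_mk]
  have hterm : ∀ k ∈ range (n + 1),
      (bb k * t ^ k) * (t ^ (n - k) / (Nat.factorial (n - k) : ℝ))
        = (bb k / (Nat.factorial (n - k) : ℝ)) * t ^ n := by
    intro k hk
    rw [Finset.mem_range] at hk
    have hpow : t ^ k * t ^ (n - k) = t ^ n := by
      rw [← pow_add]
      congr 1
      omega
    calc (bb k * t ^ k) * (t ^ (n - k) / (Nat.factorial (n - k) : ℝ))
        = (bb k / (Nat.factorial (n - k) : ℝ)) * (t ^ k * t ^ (n - k)) := by ring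
      _ = (bb k / (Nat.factorial (n - k) : ℝ)) * t ^ n := by rw [hpow]
  rw [Finset.sum_congr rfl hterm, ← Finset.sum_mul, ← TT, TT_eq_aa]

end CWeakAux

open CWeakAux Finset

/-- `c(α) = ∑_{k≥0} ((2k-1)!!/(2^k k! (k+1)!)) (-1)^k α^{2k}` for every `α > 0`. -/
theorem cWeak_eq_tsum (α : ℝ) (hα : 0 < α) :
    cWeak α = ∑' k : ℕ,
      ((Nat.doubleFactorial (2 * k - 1)) : ℝ) / (2 ^ k * (Nat.factorial k : ℝ) * (Nat.factorial (k + 1) : ℝ))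
        * (-1) ^ k * α ^ (2 * k) := by
  have hterm : ∀ k : ℕ,
      ((Nat.doubleFactorial (2 * k - 1)) : ℝ) / (2 ^ k * (Nat.factorial k : ℝ) * (Nat.factorial (k + 1) : ℝ))
        * (-1) ^ k * α ^ (2 * k) = bb k * (α ^ 2 / 2) ^ k := by
    intro k
    rw [bb, pow_mul α 2 k, div_pow]
    have h2 : (2 : ℝ) ^ k ≠ 0 := by positivity
    have ha := factorial_cast_ne k
    have hb := factorial_cast_ne (k + 1)
    field_simp
  rw [tsum_congr hterm, cWeak, besselI_sum_eq, ← CWeakAux.cauchy]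
  have hexpne := Real.exp_ne_zero (α ^ 2 / 2)
  rw [show -α ^ 2 / 2 = -(α ^ 2 / 2) from by ring, Real.exp_neg,
    mul_comm (∑' k : ℕ, bb k * (α ^ 2 / 2) ^ k) (Real.exp (α ^ 2 / 2)), ← mul_assoc,
    inv_mul_cancel₀ hexpne, one_mul]
end

section
/- The coefficient c(τ,ϱ) = ∫_{ξ_-}^{ξ_+} (x² + (1−τ²)²ϱ²/4)^{−1/4} dx can be expressed as c(τ,ϱ) = √(2/ϱ)·(1−τ²)^{−1/2}·[₂F₁(1/4, 1/2; 3/2; −4ξ_+²/(ϱ²(1−τ²)²))·ξ_+ − ₂F₁(1/4, 1/2; 3/2; −4ξ_-²/(ϱ²(1−τ²)²))·ξ_-] for τ ∈ [0,1) and ϱ > 0. -/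
/-!
With `m = ϱ(1−τ²)/2` the integrand is `(x² + m²)^(-1/4)`. The scaling `x = ξ s` gives
`∫₀^ξ (x² + m²)^(-a) dx = m^(-2a) ξ ∫₀¹ (1 + (ξ/m)² s²)^(-a) ds`, and the substitution `t = s²`
turns the Euler integral of `₂F₁(a, 1/2; 3/2; z)` into `∫₀¹ (1 − z s²)^(-a) ds`. Splitting
`∫_{ξ₋}^{ξ₊}` at `0` yields the formula.
-/

open Real

/-- The Gauss hypergeometric function `₂F₁(a,b;c;z)` via the Euler integral
(for `c > b > 0`, `z ≤ 0`):
`₂F₁(a,b;c;z) = Γ(c)/(Γ(b)Γ(c−b)) ∫₀¹ t^{b−1}(1−t)^{c−b−1}(1−zt)^{−a} dt`. -/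
noncomputable def hyp2F1 (a b c z : ℝ) : ℝ :=
  Real.Gamma c / (Real.Gamma b * Real.Gamma (c - b)) *
    ∫ t in (0 : ℝ)..1, t ^ (b - 1) * (1 - t) ^ (c - b - 1) * (1 - z * t) ^ (-a)

open MeasureTheory Set

theorem integral_rpow_neg_half_mul_eq_two_mul_integral_comp_sq (g : ℝ → ℝ) {b : ℝ} (hb : 0 ≤ b) :
    ∫ t in (0 : ℝ)..b ^ 2, t ^ (-(1 / 2) : ℝ) * g t = 2 * ∫ s in (0 : ℝ)..b, g (s ^ 2) := by
  have himage : (fun s : ℝ => s ^ 2) '' Ioc 0 b = Ioc 0 (b ^ 2) := by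
    ext t
    constructor
    · rintro ⟨s, ⟨hs0, hsb⟩, rfl⟩
      exact ⟨by positivity, pow_le_pow_left₀ hs0.le hsb 2⟩
    · rintro ⟨ht0, htb⟩
      refine ⟨√t, ⟨sqrt_pos.2 ht0, ?_⟩, sq_sqrt ht0.le⟩
      simpa [sqrt_sq hb] using sqrt_le_sqrt htb
  rw [intervalIntegral.integral_of_le (sq_nonneg b), intervalIntegral.integral_of_le hb,
    ← himage, integral_image_eq_integral_abs_deriv_smul measurableSet_Ioc
      (fun s _ => (hasDerivAt_pow 2 s).hasDerivWithinAt)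
      (fun s hs t ht => (pow_left_inj₀ hs.1.le ht.1.le two_ne_zero).1),
    ← integral_const_mul]
  refine setIntegral_congr_fun measurableSet_Ioc fun s hs => ?_
  have hs : 0 < s := hs.1
  have hsqrt : (s ^ 2) ^ (-(1 / 2) : ℝ) = s⁻¹ := by
    rw [← rpow_natCast, ← rpow_mul hs.le]
    norm_num [rpow_neg_one]
  simp only [smul_eq_mul, hsqrt, abs_of_pos (by positivity : (0 : ℝ) < (2 : ℕ) * s ^ (2 - 1))]
  field_simp
  ring

theorem hyp2F1_half_threeHalves (a z : ℝ) :
    hyp2F1 a (1 / 2) (3 / 2) z = ∫ s in (0 : ℝ)..1, (1 - z * s ^ 2) ^ (-a) := by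
  have hGamma : Gamma (3 / 2) / (Gamma (1 / 2) * Gamma (3 / 2 - 1 / 2)) = 1 / 2 := by
    rw [show (3 / 2 : ℝ) - 1 / 2 = 1 by norm_num, Gamma_one,
      show (3 / 2 : ℝ) = 1 / 2 + 1 by norm_num, Gamma_add_one (by norm_num)]
    field_simp [(Gamma_pos_of_pos (by norm_num : (0 : ℝ) < 1 / 2)).ne']
  have hexp : (1 / 2 : ℝ) - 1 = -(1 / 2) ∧ (3 / 2 : ℝ) - 1 / 2 - 1 = 0 := by norm_num
  have hsubst := integral_rpow_neg_half_mul_eq_two_mul_integral_comp_sq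
    (fun t => (1 - z * t) ^ (-a)) zero_le_one
  rw [one_pow] at hsubst
  simp only [hyp2F1, hGamma, hexp, rpow_zero, mul_one, hsubst]
  ring

theorem integral_zero_rpow_sq_add_sq (a ξ : ℝ) {m : ℝ} (hm : 0 < m) :
    ∫ x in (0 : ℝ)..ξ, (x ^ 2 + m ^ 2) ^ (-a)
      = m ^ (-(2 * a)) * (hyp2F1 a (1 / 2) (3 / 2) (-(ξ / m) ^ 2) * ξ) := by
  have hscale : ∀ s : ℝ, ((ξ * s) ^ 2 + m ^ 2) ^ (-a)
      = m ^ (-(2 * a)) * (1 - -(ξ / m) ^ 2 * s ^ 2) ^ (-a) := by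
    intro s
    have hfactor : (ξ * s) ^ 2 + m ^ 2 = m ^ 2 * (1 - -(ξ / m) ^ 2 * s ^ 2) := by
      field_simp
      ring
    rw [hfactor, mul_rpow (sq_nonneg m) (by rw [neg_mul, sub_neg_eq_add]; positivity),
      ← rpow_natCast, ← rpow_mul hm.le]
    norm_num
  have hsubst := intervalIntegral.smul_integral_comp_mul_left
    (fun x => (x ^ 2 + m ^ 2) ^ (-a)) ξ (a := 0) (b := 1)
  simp only [mul_zero, mul_one, smul_eq_mul, hscale, intervalIntegral.integral_const_mul] at hsubst
  rw [← hsubst, hyp2F1_half_threeHalves]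
  ring

theorem integral_rpow_sq_add_sq (a ξ₁ ξ₂ : ℝ) {m : ℝ} (hm : 0 < m) :
    ∫ x in ξ₁..ξ₂, (x ^ 2 + m ^ 2) ^ (-a)
      = m ^ (-(2 * a)) * (hyp2F1 a (1 / 2) (3 / 2) (-(ξ₂ / m) ^ 2) * ξ₂
          - hyp2F1 a (1 / 2) (3 / 2) (-(ξ₁ / m) ^ 2) * ξ₁) := by
  have hcont : Continuous fun x : ℝ => (x ^ 2 + m ^ 2) ^ (-a) :=
    (by fun_prop : Continuous fun x : ℝ => x ^ 2 + m ^ 2).rpow_const fun x => Or.inl (by positivity)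
  rw [← intervalIntegral.integral_interval_sub_left (hcont.intervalIntegrable 0 ξ₂)
    (hcont.intervalIntegrable 0 ξ₁), integral_zero_rpow_sq_add_sq a _ hm,
    integral_zero_rpow_sq_add_sq a _ hm, mul_sub]

/-- hypergeometric expression for
`c(τ,ϱ) = ∫_{ξ₋}^{ξ₊} (x² + (1−τ²)²ϱ²/4)^{−1/4} dx`, where
`ξ± = τ(2+ϱ) ± (1+τ²)√(1+ϱ)`, for `τ ∈ [0,1)` and `ϱ > 0`. -/
theorem c_strong_hypergeometric (τ ϱ : ℝ) (hτ0 : 0 ≤ τ) (hτ1 : τ < 1) (hϱ : 0 < ϱ) :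
    (∫ x in (τ * (2 + ϱ) - (1 + τ ^ 2) * Real.sqrt (1 + ϱ))..(τ * (2 + ϱ) + (1 + τ ^ 2) * Real.sqrt (1 + ϱ)),
        (x ^ 2 + (1 - τ ^ 2) ^ 2 * ϱ ^ 2 / 4) ^ (-(1 / 4 : ℝ)))
      = Real.sqrt (2 / ϱ) * (1 - τ ^ 2) ^ (-(1 / 2 : ℝ)) *
        (hyp2F1 (1 / 4) (1 / 2) (3 / 2)
            (-(4 * (τ * (2 + ϱ) + (1 + τ ^ 2) * Real.sqrt (1 + ϱ)) ^ 2 / (ϱ ^ 2 * (1 - τ ^ 2) ^ 2)))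
            * (τ * (2 + ϱ) + (1 + τ ^ 2) * Real.sqrt (1 + ϱ))
          - hyp2F1 (1 / 4) (1 / 2) (3 / 2)
            (-(4 * (τ * (2 + ϱ) - (1 + τ ^ 2) * Real.sqrt (1 + ϱ)) ^ 2 / (ϱ ^ 2 * (1 - τ ^ 2) ^ 2)))
            * (τ * (2 + ϱ) - (1 + τ ^ 2) * Real.sqrt (1 + ϱ))) := by
  have hτ : 0 < 1 - τ ^ 2 := by nlinarith
  set m := ϱ * (1 - τ ^ 2) / 2
  have hm : 0 < m := by positivity
  have harg : ∀ ξ : ℝ, -(4 * ξ ^ 2 / (ϱ ^ 2 * (1 - τ ^ 2) ^ 2)) = -(ξ / m) ^ 2 := by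
    intro ξ
    field_simp
    ring
  have hprefactor : √(2 / ϱ) * (1 - τ ^ 2) ^ (-(1 / 2 : ℝ)) = m ^ (-(2 * (1 / 4 : ℝ))) := by
    rw [show -(2 * (1 / 4 : ℝ)) = -(1 / 2) by norm_num, sqrt_eq_rpow, rpow_neg hτ.le,
      ← inv_rpow hτ.le, ← mul_rpow (by positivity) (by positivity), rpow_neg hm.le,
      ← inv_rpow hm.le]
    congr 1
    simp only [m]
    field_simp
  rw [show (1 - τ ^ 2) ^ 2 * ϱ ^ 2 / 4 = m ^ 2 by ring, integral_rpow_sq_add_sq _ _ _ hm,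
    harg, harg, hprefactor]
end
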